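/- arXiv:2502.04124 — 2 statements merged into one kernel-verified Lean document; each statement's English description precedes it below -/
import Mathlib

section
/- Let m be a positive integer and G a finite semisimple group (a direct product of nonabelian simple groups) such that |x^G| ≤ m for every x ∈ X(G). Then |G| is bounded by a function of m only. -/
/-!
Let `S` be a nonabelian finite simple group and `p` a prime dividing `|S|`, with Sylow subgroup
`P`. If every commutator `[x, y]` with `x, [x, y] ∈ P` were trivial, then `N(P) ≤ C(P)`, and
Burnside's transfer theorem would give `P` a normal complement, which simplicity rules out. So
`S` has a nontrivial such commutator for the prime `p`.

In `G = ∏ Sᵢ` choose such commutators for one prime `p` in the factors `i ∈ T` and `1`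
elsewhere: the product of Sylow `p`-subgroups is a `p`-subgroup of `G`, so the resulting element
lies in `X(G)`. Conjugacy classes in `G` are products of classes in the factors, and nontrivial
classes in a nonabelian simple group have size at least `2`, so `2 ^ |T| ≤ m`. With `T = {i}` the
nontrivial element `zᵢ` has a centralizer of index at most `m`, and a simple group embeds in the
symmetric group on the cosets of any proper subgroup, so `|Sᵢ| ≤ m!`. Hence every factor has
order at most `m!`, the primes involved are at most `m!`, each occurs for at most `m` factors,
and `|G| ≤ (m!) ^ (m (m! + 1))`.
-/

/-- `Xset G` is the set of commutators `[x,y] = x⁻¹y⁻¹xy` such that `x` and `[x,y]`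
both lie in some Sylow subgroup `P` of `G`, `y` arbitrary. -/
def Xset (G : Type*) [Group G] : Set G :=
  {z | ∃ (p : ℕ) (_ : Fact p.Prime) (P : Sylow p G) (x y : G),
    z = x⁻¹ * y⁻¹ * x * y ∧ x ∈ (P : Subgroup G) ∧ z ∈ (P : Subgroup G)}

open Finset
open scoped Nat

/-- The prime `p` yields a nontrivial element of `Xset G`. -/
def HasNontrivialSylowCommutator (p : ℕ) (G : Type*) [Group G] : Prop :=
  ∃ (P : Sylow p G) (x y : G), x ∈ (P : Subgroup G) ∧
    x⁻¹ * y⁻¹ * x * y ∈ (P : Subgroup G) ∧ x⁻¹ * y⁻¹ * x * y ≠ 1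

section SimpleGroup

variable {G : Type*} [Group G]

theorem Subgroup.normalizer_le_centralizer_of_commutator_eq_one {H : Subgroup G}
    (h : ∀ x ∈ H, ∀ y : G, x⁻¹ * y⁻¹ * x * y ∈ H → x⁻¹ * y⁻¹ * x * y = 1) :
    Subgroup.normalizer (H : Set G) ≤ Subgroup.centralizer (H : Set G) := by
  intro y hy
  rw [Subgroup.mem_centralizer_iff]
  intro x hx
  have hconj : y⁻¹ * x * y ∈ H := by
    simpa using (Subgroup.mem_normalizer_iff.mp (inv_mem hy) x).mp hx
  have hcomm : x⁻¹ * y⁻¹ * x * y = 1 :=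
    h x hx y (by simpa [mul_assoc] using mul_mem (inv_mem hx) hconj)
  calc x * y = y * x * (x⁻¹ * y⁻¹ * x * y) := by group
    _ = y * x := by rw [hcomm, mul_one]

theorem card_isConj_eq_index_centralizer (z : G) :
    Nat.card {h : G // IsConj z h} = (Subgroup.centralizer {z}).index := by
  have hstab : (Subgroup.centralizer {z}).index = (MulAction.stabilizer (ConjAct G) z).index := by
    rw [Subgroup.centralizer_eq_comap_stabilizer]
    exact Subgroup.index_comap_of_surjective _ (MulEquiv.surjective _)
  rw [hstab, MulAction.index_stabilizer, ← Nat.card_coe_set_eq]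
  exact Nat.card_congr (Equiv.subtypeEquivRight fun h => by
    rw [ConjAct.mem_orbit_conjAct, isConj_comm])

variable [IsSimpleGroup G]

theorem IsSimpleGroup.card_dvd_factorial_index [Finite G] {H : Subgroup G} (hH : H ≠ ⊤) :
    Nat.card G ∣ H.index ! := by
  have hcore : H.normalCore = ⊥ := H.normalCore_normal.eq_bot_or_eq_top.resolve_right
    fun htop => hH (top_le_iff.mp (htop ▸ H.normalCore_le))
  rw [← Subgroup.index_bot, ← hcore, Subgroup.normalCore_eq_ker, Subgroup.index_ker,
    Subgroup.index_eq_card, ← Nat.card_perm]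
  exact Subgroup.card_subgroup_dvd_card _

theorem IsSimpleGroup.center_eq_bot_of_exists_ne_mul (hG : ∃ a b : G, a * b ≠ b * a) :
    Subgroup.center G = ⊥ := by
  refine (Subgroup.Normal.eq_bot_or_eq_top inferInstance).resolve_right fun htop => ?_
  obtain ⟨a, b, hab⟩ := hG
  exact hab (Subgroup.mem_center_iff.mp (htop ▸ Subgroup.mem_top b) a)

theorem IsSimpleGroup.centralizer_ne_top (hG : ∃ a b : G, a * b ≠ b * a) {z : G}
    (hz : z ≠ 1) : Subgroup.centralizer {z} ≠ ⊤ := by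
  rwa [Ne, Subgroup.centralizer_eq_top_iff_subset, Set.singleton_subset_iff,
    center_eq_bot_of_exists_ne_mul hG, SetLike.mem_coe, Subgroup.mem_bot]

theorem IsSimpleGroup.two_le_card_isConj [Finite G] (hG : ∃ a b : G, a * b ≠ b * a) {z : G}
    (hz : z ≠ 1) : 2 ≤ Nat.card {h : G // IsConj z h} := by
  rw [card_isConj_eq_index_centralizer]
  exact Subgroup.one_lt_index_of_ne_top (centralizer_ne_top hG hz)

theorem IsSimpleGroup.hasNontrivialSylowCommutator [Finite G] (hG : ∃ a b : G, a * b ≠ b * a)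
    {p : ℕ} [Fact p.Prime] (hp : p ∣ Nat.card G) : HasNontrivialSylowCommutator p G := by
  by_contra hcon
  let P : Sylow p G := default
  have hN : Subgroup.normalizer (P : Set G) ≤ Subgroup.centralizer (P : Set G) :=
    Subgroup.normalizer_le_centralizer_of_commutator_eq_one fun x hx y hz => by
      by_contra hne
      exact hcon ⟨P, x, y, hx, hz, hne⟩
  rcases (MonoidHom.transferSylow P hN).normal_ker.eq_bot_or_eq_top with hK | hK
  · have hP : (P : Subgroup G) = ⊤ := Subgroup.isComplement'_bot_left.mp
      (hK ▸ MonoidHom.ker_transferSylow_isComplement' P hN)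
    have : Nontrivial G := let ⟨a, b, hab⟩ := hG; ⟨⟨a * b, b * a, hab⟩⟩
    have := ((hP ▸ P.isPGroup').of_equiv Subgroup.topEquiv).center_nontrivial
    exact (Subgroup.nontrivial_iff_ne_bot _).mp this (center_eq_bot_of_exists_ne_mul hG)
  · apply MonoidHom.not_dvd_card_ker_transferSylow P hN
    rwa [hK, Subgroup.card_top]

theorem IsSimpleGroup.exists_prime_hasNontrivialSylowCommutator [Finite G]
    (hG : ∃ a b : G, a * b ≠ b * a) :
    ∃ p, p.Prime ∧ p ∣ Nat.card G ∧ HasNontrivialSylowCommutator p G := by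
  have : Nontrivial G := let ⟨a, b, hab⟩ := hG; ⟨⟨a * b, b * a, hab⟩⟩
  obtain ⟨p, hp, hdvd⟩ := Nat.exists_prime_and_dvd (Finite.one_lt_card (α := G)).ne'
  have := Fact.mk hp
  exact ⟨p, hp, hdvd, hasNontrivialSylowCommutator hG hdvd⟩

end SimpleGroup

section Pi

variable {ι : Type*} {S : ι → Type*} [∀ i, Group (S i)]

theorem Pi.isConj_iff {x y : ∀ i, S i} : IsConj x y ↔ ∀ i, IsConj (x i) (y i) := by
  simp only [_root_.isConj_iff]
  constructor
  · rintro ⟨c, rfl⟩ i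
    exact ⟨c i, rfl⟩
  · intro h
    choose c hc using h
    exact ⟨c, funext hc⟩

variable [Fintype ι]

theorem card_isConj_pi (x : ∀ i, S i) :
    Nat.card {h : ∀ i, S i // IsConj x h} = ∏ i, Nat.card {h : S i // IsConj (x i) h} := by
  rw [← Nat.card_pi]
  exact Nat.card_congr
    ((Equiv.subtypeEquivRight fun _ => Pi.isConj_iff).trans Equiv.subtypePiEquivPi)

theorem prod_card_isConj_le_card_isConj_pi [∀ i, Finite (S i)] (T : Finset ι)
    (x : ∀ i, S i) :
    ∏ i ∈ T, Nat.card {h : S i // IsConj (x i) h} ≤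
      Nat.card {h : ∀ i, S i // IsConj x h} := by
  rw [card_isConj_pi]
  exact prod_le_prod_of_subset_of_one_le' T.subset_univ fun i _ _ =>
    Nat.card_pos_iff.mpr ⟨⟨⟨x i, .refl _⟩⟩, inferInstance⟩

theorem IsPGroup.pi {p : ℕ} {K : ∀ i, Subgroup (S i)} (hK : ∀ i, IsPGroup p (K i)) :
    IsPGroup p (Subgroup.pi Set.univ K) := by
  rintro ⟨g, hg⟩
  choose k hk using fun i => hK i ⟨g i, hg i trivial⟩
  refine ⟨∑ i, k i, Subtype.ext <| funext fun i => ?_⟩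
  have hdvd : orderOf (g i) ∣ p ^ ∑ j, k j :=
    (orderOf_dvd_of_pow_eq_one (congrArg Subtype.val (hk i))).trans
      (pow_dvd_pow p (single_le_sum (fun _ _ => Nat.zero_le _) (mem_univ i)))
  exact orderOf_dvd_iff_pow_eq_one.mp hdvd

theorem commutator_mem_Xset_pi {p : ℕ} [Fact p.Prime] (P : ∀ i, Sylow p (S i))
    {x y : ∀ i, S i} (hx : ∀ i, x i ∈ (P i : Subgroup (S i)))
    (hz : ∀ i, (x i)⁻¹ * (y i)⁻¹ * x i * y i ∈ (P i : Subgroup (S i))) :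
    x⁻¹ * y⁻¹ * x * y ∈ Xset (∀ i, S i) := by
  obtain ⟨Q, hQ⟩ := (IsPGroup.pi fun i => (P i).isPGroup').exists_le_sylow
  exact ⟨p, inferInstance, Q, x, y, rfl, hQ fun i _ => hx i, hQ fun i _ => hz i⟩

theorem exists_mem_Xset_pi_ne_one_iff {p : ℕ} [Fact p.Prime] (T : Set ι)
    (hT : ∀ i ∈ T, HasNontrivialSylowCommutator p (S i)) :
    ∃ z ∈ Xset (∀ i, S i), ∀ i, z i ≠ 1 ↔ i ∈ T := by
  have h : ∀ i, ∃ (P : Sylow p (S i)) (x y : S i), x ∈ (P : Subgroup (S i)) ∧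
      x⁻¹ * y⁻¹ * x * y ∈ (P : Subgroup (S i)) ∧
        (x⁻¹ * y⁻¹ * x * y ≠ 1 ↔ i ∈ T) := by
    intro i
    by_cases hi : i ∈ T
    · obtain ⟨P, x, y, hx, hz, hne⟩ := hT i hi
      exact ⟨P, x, y, hx, hz, iff_of_true hne hi⟩
    · exact ⟨default, 1, 1, one_mem _, by simp, by simp [hi]⟩
  choose P x y hx hz hne using h
  exact ⟨_, commutator_mem_Xset_pi P hx hz, hne⟩

end Pi

section Semisimple

variable {ι : Type*} [Fintype ι] {S : ι → Type*} [∀ i, Group (S i)] [∀ i, Finite (S i)]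
  [∀ i, IsSimpleGroup (S i)] {m : ℕ}

theorem two_pow_card_le_of_forall_mem_Xset (hS : ∀ i, ∃ a b : S i, a * b ≠ b * a)
    (hX : ∀ x ∈ Xset (∀ i, S i), Nat.card {h : ∀ i, S i // IsConj x h} ≤ m)
    {p : ℕ} [Fact p.Prime] (T : Finset ι)
    (hT : ∀ i ∈ T, HasNontrivialSylowCommutator p (S i)) : 2 ^ #T ≤ m := by
  obtain ⟨z, hzX, hz⟩ := exists_mem_Xset_pi_ne_one_iff (T : Set ι) hT
  calc 2 ^ #T = ∏ _i ∈ T, 2 := (prod_const 2).symm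
    _ ≤ ∏ i ∈ T, Nat.card {h : S i // IsConj (z i) h} :=
      prod_le_prod' fun i hi => IsSimpleGroup.two_le_card_isConj (hS i) ((hz i).mpr hi)
    _ ≤ Nat.card {h : ∀ i, S i // IsConj z h} := prod_card_isConj_le_card_isConj_pi T z
    _ ≤ m := hX z hzX

theorem card_le_factorial_of_forall_mem_Xset
    (hX : ∀ x ∈ Xset (∀ i, S i), Nat.card {h : ∀ i, S i // IsConj x h} ≤ m)
    {p : ℕ} [Fact p.Prime] (i : ι) (hS : ∃ a b : S i, a * b ≠ b * a)
    (hi : HasNontrivialSylowCommutator p (S i)) :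
    Nat.card (S i) ≤ m ! := by
  obtain ⟨z, hzX, hz⟩ := exists_mem_Xset_pi_ne_one_iff {i} (by simpa using hi)
  have hzi : z i ≠ 1 := (hz i).mpr rfl
  have hindex : (Subgroup.centralizer {z i}).index ≤ m := by
    rw [← card_isConj_eq_index_centralizer]
    calc _ = ∏ j ∈ {i}, Nat.card {h : S j // IsConj (z j) h} := (prod_singleton _ _).symm
      _ ≤ Nat.card {h : ∀ i, S i // IsConj z h} := prod_card_isConj_le_card_isConj_pi {i} z
      _ ≤ m := hX z hzX
  calc Nat.card (S i) ≤ (Subgroup.centralizer {z i}).index ! :=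
        Nat.le_of_dvd (Nat.factorial_pos _) <| IsSimpleGroup.card_dvd_factorial_index
          (IsSimpleGroup.centralizer_ne_top hS hzi)
    _ ≤ m ! := Nat.factorial_le hindex

end Semisimple

/-- If `G` is a finite semisimple group (a direct product of nonabelian simple groups)
with `|x^G| ≤ m` for all `x ∈ Xset G`, then `|G|` is `m`-bounded. -/
theorem semisimple_bounded :
    ∃ f : ℕ → ℕ, ∀ (ι : Type) (_ : Fintype ι) (S : ι → Type) (_ : ∀ i, Group (S i))
      (_ : ∀ i, Finite (S i)),
      (∀ i, IsSimpleGroup (S i)) → (∀ i, ∃ a b : S i, a * b ≠ b * a) →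
      ∀ m : ℕ, 0 < m →
      (∀ x ∈ Xset (∀ i, S i), Nat.card {h : ∀ i, S i // IsConj x h} ≤ m) →
      Nat.card (∀ i, S i) ≤ f m := by
  refine ⟨fun m => m ! ^ (m * (m ! + 1)), fun ι _ S _ _ _ hS m _ hX => ?_⟩
  choose p hp hpS hcomm using
    fun i => IsSimpleGroup.exists_prime_hasNontrivialSylowCommutator (hS i)
  have hcard (i : ι) : Nat.card (S i) ≤ m ! :=
    have := Fact.mk (hp i)
    card_le_factorial_of_forall_mem_Xset hX i (hS i) (hcomm i)
  have hfiber : ∀ q ∈ univ.image p, #{i | p i = q} ≤ m := by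
    intro q hq
    obtain ⟨i₀, -, rfl⟩ := mem_image.mp hq
    have := Fact.mk (hp i₀)
    exact Nat.lt_two_pow_self.le.trans <| two_pow_card_le_of_forall_mem_Xset hS hX _
      fun i hi => (mem_filter.mp hi).2 ▸ hcomm i
  have hprimes : univ.image p ⊆ range (m ! + 1) := by
    simp only [image_subset_iff, mem_univ, mem_range_succ_iff, forall_const]
    exact fun i => (Nat.le_of_dvd Nat.card_pos (hpS i)).trans (hcard i)
  have hι : Fintype.card ι ≤ m * (m ! + 1) :=
    calc Fintype.card ι ≤ m * #(univ.image p) := card_le_mul_card_image _ m hfiber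
      _ ≤ m * (m ! + 1) := by simpa using Nat.mul_le_mul_left m (card_le_card hprimes)
  calc Nat.card (∀ i, S i) = ∏ i, Nat.card (S i) := Nat.card_pi
    _ ≤ ∏ _i : ι, m ! := prod_le_prod' fun i _ => hcard i
    _ = m ! ^ Fintype.card ι := by rw [prod_const, card_univ]
    _ ≤ m ! ^ (m * (m ! + 1)) := Nat.pow_le_pow_right (Nat.factorial_pos m) hι
end

section
/- Let G be a finite soluble group whose order is divisible only by primes ≤ m, with Sylow basis P₁,…,P_k and system normalizer T = ∩ᵢ N_G(Pᵢ). Suppose |x^G| ≤ m for every x ∈ X(G). Then |[x,a]^G| ≤ m^k for all x ∈ G and a ∈ T. -/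
open Pointwise

/-!
Since the `Pᵢ` permute pairwise, the product of any subfamily of them is a subgroup, and the
product of all of them contains a Sylow `p`-subgroup for every `p`, so it is `G`. Hence
`x = x₁ ⋯ x_k` with `xᵢ ∈ Pᵢ`. As `[uv, a] = [u, a]ᵛ [v, a]`, the commutator `[x, a]` is a
product of conjugates of the `[xᵢ, a]`, each of which lies in `Pᵢ ∩ Xset G` because `a`
normalizes `Pᵢ`; and the class of `gh` lies in the product of the classes of `g` and `h`.
-/

namespace Subgroup

variable {G : Type*} [Group G]

theorem coe_sup_of_mul_comm {H K : Subgroup G} (hHK : (H : Set G) * K = K * H) :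
    ((H ⊔ K : Subgroup G) : Set G) = H * K := by
  have mul_self : ((H : Set G) * K) * (H * K) = H * K := by
    rw [mul_assoc, ← mul_assoc (K : Set G), ← hHK, mul_assoc, coe_mul_coe, ← mul_assoc,
      coe_mul_coe]
  have inv_self : ((H : Set G) * K)⁻¹ = H * K := by
    rw [mul_inv_rev, inv_coe_set, inv_coe_set, hHK]
  rw [sup_eq_closure_mul]
  refine Set.Subset.antisymm (fun x hx => ?_) subset_closure
  induction hx using closure_induction'' with
  | one => exact ⟨1, one_mem _, 1, one_mem _, mul_one 1⟩
  | mem _ hx => exact hx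
  | inv_mem _ hx => rw [← inv_self]; exact Set.inv_mem_inv.mpr hx
  | mul _ _ _ _ hx hy => rw [← mul_self]; exact Set.mul_mem_mul hx hy

theorem mul_comm_coe_sup {H K L : Subgroup G} (hK : (H : Set G) * K = K * H)
    (hL : (H : Set G) * L = L * H) (hKL : (K : Set G) * L = L * K) :
    (H : Set G) * ↑(K ⊔ L) = ↑(K ⊔ L) * H := by
  rw [coe_sup_of_mul_comm hKL, ← mul_assoc, hK, mul_assoc, hL, mul_assoc]

variable {ι : Type*} {H : ι → Subgroup G}

theorem mul_comm_coe_biSup (hH : ∀ i j, (H i : Set G) * H j = H j * H i) (s : Finset ι) (j : ι) :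
    (H j : Set G) * ↑(⨆ i ∈ s, H i) = ↑(⨆ i ∈ s, H i) * H j := by
  classical
  induction s using Finset.induction_on generalizing j with
  | empty => simp
  | insert i s _ ih => rw [Finset.iSup_insert]; exact mul_comm_coe_sup (hH j i) (ih j) (ih i)

end Subgroup

section Commutator

variable {G : Type*} [Group G]

theorem card_isConj_congr {g g' : G} (h : IsConj g g') :
    Nat.card {x : G // IsConj g x} = Nat.card {x : G // IsConj g' x} :=
  Nat.card_congr <| Equiv.subtypeEquivRight fun _ => ⟨h.symm.trans, h.trans⟩

variable [Finite G]

theorem card_isConj_mul_le (g h : G) :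
    Nat.card {x : G // IsConj (g * h) x} ≤
      Nat.card {x : G // IsConj g x} * Nat.card {x : G // IsConj h x} := by
  have hsub : {x : G | IsConj (g * h) x} ⊆ {x : G | IsConj g x} * {x : G | IsConj h x} := by
    intro x hx
    obtain ⟨c, rfl⟩ := isConj_iff.mp hx
    exact ⟨c * g * c⁻¹, isConj_iff.mpr ⟨c, rfl⟩, c * h * c⁻¹, isConj_iff.mpr ⟨c, rfl⟩, by group⟩
  exact (Nat.card_mono (Set.toFinite _) hsub).trans Set.natCard_mul_le

variable (a : G)

theorem card_isConj_commutator_mul_le (u v : G) :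
    Nat.card {x : G // IsConj ((u * v)⁻¹ * a⁻¹ * (u * v) * a) x} ≤
      Nat.card {x : G // IsConj (u⁻¹ * a⁻¹ * u * a) x} *
        Nat.card {x : G // IsConj (v⁻¹ * a⁻¹ * v * a) x} := by
  have hconj : IsConj (u⁻¹ * a⁻¹ * u * a) (v⁻¹ * (u⁻¹ * a⁻¹ * u * a) * v) :=
    isConj_iff.mpr ⟨v⁻¹, by group⟩
  rw [card_isConj_congr hconj,
    show (u * v)⁻¹ * a⁻¹ * (u * v) * a =
      (v⁻¹ * (u⁻¹ * a⁻¹ * u * a) * v) * (v⁻¹ * a⁻¹ * v * a) by group]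
  exact card_isConj_mul_le _ _

theorem card_isConj_commutator_le_of_mem_sup {H K : Subgroup G}
    (hHK : (H : Set G) * K = K * H) {m n : ℕ}
    (hH : ∀ u ∈ H, Nat.card {x : G // IsConj (u⁻¹ * a⁻¹ * u * a) x} ≤ m)
    (hK : ∀ v ∈ K, Nat.card {x : G // IsConj (v⁻¹ * a⁻¹ * v * a) x} ≤ n) :
    ∀ g ∈ H ⊔ K, Nat.card {x : G // IsConj (g⁻¹ * a⁻¹ * g * a) x} ≤ m * n := by
  intro g hg
  obtain ⟨u, hu, v, hv, rfl⟩ : g ∈ (H : Set G) * K := Subgroup.coe_sup_of_mul_comm hHK ▸ hg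
  exact (card_isConj_commutator_mul_le a u v).trans (Nat.mul_le_mul (hH u hu) (hK v hv))

theorem card_isConj_commutator_le_of_mem_biSup {ι : Type*} {H : ι → Subgroup G}
    (hH : ∀ i j, (H i : Set G) * H j = H j * H i) {m : ℕ}
    (hbound : ∀ i, ∀ u ∈ H i, Nat.card {x : G // IsConj (u⁻¹ * a⁻¹ * u * a) x} ≤ m)
    (s : Finset ι) :
    ∀ g ∈ ⨆ i ∈ s, H i, Nat.card {x : G // IsConj (g⁻¹ * a⁻¹ * g * a) x} ≤ m ^ s.card := by
  classical
  induction s using Finset.induction_on with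
  | empty =>
    intro g hg
    simp only [Finset.notMem_empty, iSup_false, iSup_bot, Subgroup.mem_bot] at hg
    simp [hg]
  | insert i s hi ih =>
    rw [Finset.iSup_insert, Finset.card_insert_of_notMem hi, pow_succ']
    exact card_isConj_commutator_le_of_mem_sup a (Subgroup.mul_comm_coe_biSup hH s i)
      (hbound i) ih

end Commutator

theorem commutator_mem_Xset_of_mem_normalizer {G : Type*} [Group G] {p : ℕ} (hp : p.Prime)
    (P : Sylow p G) {u a : G} (hu : u ∈ (P : Subgroup G))
    (ha : a ∈ Subgroup.normalizer ((P : Subgroup G) : Set G)) :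
    u⁻¹ * a⁻¹ * u * a ∈ Xset G := by
  have hua : a⁻¹ * u * a ∈ (P : Subgroup G) := by
    simpa [mul_assoc] using
      (Subgroup.mem_normalizer_iff.mp (Subgroup.inv_mem _ ha) u).mp hu
  refine ⟨p, ⟨hp⟩, P, u, a, rfl, hu, ?_⟩
  simpa only [mul_assoc] using Subgroup.mul_mem _ (Subgroup.inv_mem _ hu) hua

theorem Sylow.iSup_eq_top {G : Type*} [Group G] [Finite G] {ι : Type*} {ps : ι → ℕ}
    (P : ∀ i, Sylow (ps i) G) (hall : ∀ p : ℕ, p.Prime → p ∣ Nat.card G → ∃ i, ps i = p) :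
    ⨆ i, (P i : Subgroup G) = ⊤ := by
  rw [← Subgroup.index_eq_one, Nat.eq_one_iff_not_exists_prime_dvd]
  intro p hp hdvd
  obtain ⟨i, rfl⟩ := hall p hp (hdvd.trans (Subgroup.index_dvd_card _))
  have : Fact (ps i).Prime := ⟨hp⟩
  have hle : (P i : Subgroup G) ≤ ⨆ j, (P j : Subgroup G) := le_iSup (fun j => (P j : Subgroup G)) i
  exact (P i).not_dvd_index (hdvd.trans (Subgroup.index_dvd_of_le hle))

theorem class_of_commutator_with_systemNormalizer_bounded_general
    (G : Type*) [Group G] [Finite G] (m k : ℕ)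
    (ps : Fin k → ℕ) (hps : ∀ i, (ps i).Prime)
    (hall : ∀ p : ℕ, p.Prime → p ∣ Nat.card G → ∃ i, ps i = p)
    (P : ∀ i : Fin k, Sylow (ps i) G)
    (hperm : ∀ i j, ((P i : Subgroup G) : Set G) * ((P j : Subgroup G) : Set G) =
      ((P j : Subgroup G) : Set G) * ((P i : Subgroup G) : Set G))
    (hX : ∀ x ∈ Xset G, Nat.card {h : G // IsConj x h} ≤ m) :
    ∀ x : G, ∀ a ∈ ⨅ i, Subgroup.normalizer ((P i : Subgroup G) : Set G),
      Nat.card {h : G // IsConj (x⁻¹ * a⁻¹ * x * a) h} ≤ m ^ k := by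
  intro x a ha
  have hXP : ∀ i, ∀ u ∈ (P i : Subgroup G),
      Nat.card {h : G // IsConj (u⁻¹ * a⁻¹ * u * a) h} ≤ m := fun i u hu =>
    hX _ (commutator_mem_Xset_of_mem_normalizer (hps i) (P i) hu (Subgroup.mem_iInf.mp ha i))
  have hx : x ∈ ⨆ i ∈ Finset.univ, (P i : Subgroup G) := by
    simp [Sylow.iSup_eq_top P hall]
  simpa using card_isConj_commutator_le_of_mem_biSup a hperm hXP Finset.univ x hx

/-- Let `G` be a finite soluble group whose order has only prime divisors `≤ m`, with
Sylow basis `P₁, …, P_k` and system normalizer `T = ⋂ᵢ N_G(Pᵢ)`. If `|x^G| ≤ m` for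
all `x ∈ Xset G`, then `|[x,a]^G| ≤ m^k` for all `x ∈ G`, `a ∈ T`. -/
theorem class_of_commutator_with_systemNormalizer_bounded
    (G : Type*) [Group G] [Finite G] [Group.IsSolvable G] (m k : ℕ) (hm : 0 < m)
    (hπ : ∀ p : ℕ, p.Prime → p ∣ Nat.card G → p ≤ m)
    (ps : Fin k → ℕ) (hps : ∀ i, (ps i).Prime) (hinj : Function.Injective ps)
    (hall : ∀ p : ℕ, p.Prime → p ∣ Nat.card G → ∃ i, ps i = p)
    (P : ∀ i : Fin k, Sylow (ps i) G)
    (hperm : ∀ i j, ((P i : Subgroup G) : Set G) * ((P j : Subgroup G) : Set G) =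
      ((P j : Subgroup G) : Set G) * ((P i : Subgroup G) : Set G))
    (hX : ∀ x ∈ Xset G, Nat.card {h : G // IsConj x h} ≤ m) :
    ∀ x : G, ∀ a ∈ ⨅ i, Subgroup.normalizer ((P i : Subgroup G) : Set G),
      Nat.card {h : G // IsConj (x⁻¹ * a⁻¹ * x * a) h} ≤ m ^ k :=
  class_of_commutator_with_systemNormalizer_bounded_general G m k ps hps hall P hperm hX
end
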